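/- (Ben-David et al. bound) For every hypothesis h ∈ H, the target risk satisfies R_T(h) ≤ R_S(h) + d_{HΔH}(p_S, p_T) + λ_H, where λ_H = inf_{h' ∈ H} [R_S(h') + R_T(h')]. (In the formal version, for any h* ∈ H one shows R_T(h) ≤ R_S(h) + d_{HΔH}(p_S, p_T) + R_S(h*) + R_T(h*).) -/

import Mathlib

open MeasureTheory

/-- Zero-one loss on binary labels. -/
noncomputable def zoLoss (a b : Bool) : ℝ := if a = b then 0 else 1

/-- Expected disagreement between two binary hypotheses under a distribution on `X`. -/
noncomputable def riskD {X : Type*} [MeasurableSpace X] (μ : Measure X)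
    (h h' : X → Bool) : ℝ := ∫ x, zoLoss (h x) (h' x) ∂μ

/-- Risk of a hypothesis against true labels, for a joint distribution on `X × Bool`. -/
noncomputable def riskJ {X : Type*} [MeasurableSpace X] (μ : Measure (X × Bool))
    (h : X → Bool) : ℝ := ∫ p, zoLoss (h p.1) p.2 ∂μ

/-- The `HΔH`-divergence between two distributions on `X`. -/
noncomputable def hDiv {X : Type*} [MeasurableSpace X] (μ ν : Measure X)
    (H : Set (X → Bool)) : ℝ :=
  sSup {r | ∃ h ∈ H, ∃ h' ∈ H, r = |riskD μ h h' - riskD ν h h'|}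

/-- The `F_{GΔG}`-divergence between two distributions on `X`. -/
noncomputable def fggDiv {X Z : Type*} [MeasurableSpace X] (μ ν : Measure X)
    (F : Set (Z → Bool)) (G : Set (X → Z)) : ℝ :=
  sSup {r | ∃ f ∈ F, ∃ g ∈ G, ∃ g' ∈ G,
    r = |riskD μ (f ∘ g) (f ∘ g') - riskD ν (f ∘ g) (f ∘ g')|}

/-! The target risk of `h` is at most its disagreement with `h*` on the target plus `R_T(h*)`
(triangle inequality for the zero-one loss). The disagreement on the target differs from the
disagreement on the source by at most `d_{HΔH}`, and the disagreement on the source is at most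
`R_S(h) + R_S(h*)`, again by the triangle inequality through the true label. -/

theorem zoLoss_nonneg (a b : Bool) : 0 ≤ zoLoss a b := by
  unfold zoLoss; split <;> norm_num

theorem zoLoss_le_one (a b : Bool) : zoLoss a b ≤ 1 := by
  unfold zoLoss; split <;> norm_num

theorem zoLoss_comm (a b : Bool) : zoLoss a b = zoLoss b a := by
  cases a <;> cases b <;> rfl

theorem zoLoss_triangle (a b c : Bool) : zoLoss a c ≤ zoLoss a b + zoLoss b c := by
  cases a <;> cases b <;> cases c <;> norm_num [zoLoss]

section Disagreement

variable {α : Type*} [MeasurableSpace α] {μ : Measure α} {f g k : α → Bool}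

theorem measurable_zoLoss (hf : Measurable f) (hg : Measurable g) :
    Measurable fun x => zoLoss (f x) (g x) :=
  (measurable_of_finite fun p : Bool × Bool => zoLoss p.1 p.2).comp (hf.prodMk hg)

theorem integrable_zoLoss [IsFiniteMeasure μ] (hf : Measurable f) (hg : Measurable g) :
    Integrable (fun x => zoLoss (f x) (g x)) μ :=
  .of_bound (measurable_zoLoss hf hg).aestronglyMeasurable 1 <| ae_of_all _ fun _ => by
    rw [Real.norm_of_nonneg (zoLoss_nonneg _ _)]
    exact zoLoss_le_one _ _

theorem riskD_nonneg (μ : Measure α) (f g : α → Bool) : 0 ≤ riskD μ f g :=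
  integral_nonneg fun _ => zoLoss_nonneg _ _

theorem riskD_le_one [IsProbabilityMeasure μ] (hf : Measurable f) (hg : Measurable g) :
    riskD μ f g ≤ 1 := by
  simpa [riskD] using integral_mono (integrable_zoLoss (μ := μ) hf hg)
    (integrable_const (1 : ℝ)) fun _ => zoLoss_le_one _ _

theorem riskD_comm (μ : Measure α) (f g : α → Bool) : riskD μ f g = riskD μ g f := by
  simp only [riskD, zoLoss_comm]

theorem riskD_triangle [IsFiniteMeasure μ] (hf : Measurable f) (hg : Measurable g)
    (hk : Measurable k) : riskD μ f k ≤ riskD μ f g + riskD μ g k := by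
  rw [riskD, riskD, riskD, ← integral_add (integrable_zoLoss hf hg) (integrable_zoLoss hg hk)]
  exact integral_mono (integrable_zoLoss hf hk)
    ((integrable_zoLoss hf hg).add (integrable_zoLoss hg hk)) fun _ => zoLoss_triangle _ _ _

theorem riskD_map {β : Type*} [MeasurableSpace β] {φ : α → β} (hφ : Measurable φ)
    {f g : β → Bool} (hf : Measurable f) (hg : Measurable g) :
    riskD (μ.map φ) f g = riskD μ (f ∘ φ) (g ∘ φ) :=
  integral_map hφ.aemeasurable (measurable_zoLoss hf hg).aestronglyMeasurable

theorem abs_riskD_sub_riskD_le_hDiv {ν : Measure α} [IsProbabilityMeasure μ]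
    [IsProbabilityMeasure ν] {H : Set (α → Bool)} (hH : ∀ h ∈ H, Measurable h)
    {h h' : α → Bool} (hh : h ∈ H) (hh' : h' ∈ H) :
    |riskD μ h h' - riskD ν h h'| ≤ hDiv μ ν H := by
  refine le_csSup ⟨1, ?_⟩ ⟨h, hh, h', hh', rfl⟩
  rintro r ⟨g, hg, g', hg', rfl⟩
  exact abs_sub_le_of_nonneg_of_le (riskD_nonneg _ _ _) (riskD_le_one (hH g hg) (hH g' hg'))
    (riskD_nonneg _ _ _) (riskD_le_one (hH g hg) (hH g' hg'))

end Disagreement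

section JointRisk

variable {X : Type*} [MeasurableSpace X]

theorem riskJ_eq_riskD (μ : Measure (X × Bool)) (h : X → Bool) :
    riskJ μ h = riskD μ (h ∘ Prod.fst) Prod.snd := rfl

variable {μ : Measure (X × Bool)} [IsFiniteMeasure μ] {h h' : X → Bool}

theorem riskJ_le_riskD_map_fst_add (hh : Measurable h) (hh' : Measurable h') :
    riskJ μ h ≤ riskD (μ.map Prod.fst) h h' + riskJ μ h' := by
  rw [riskD_map measurable_fst hh hh', riskJ_eq_riskD, riskJ_eq_riskD]
  exact riskD_triangle (hh.comp measurable_fst) (hh'.comp measurable_fst) measurable_snd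

theorem riskD_map_fst_le_riskJ_add (hh : Measurable h) (hh' : Measurable h') :
    riskD (μ.map Prod.fst) h h' ≤ riskJ μ h + riskJ μ h' := by
  rw [riskD_map measurable_fst hh hh', riskJ_eq_riskD, riskJ_eq_riskD,
    riskD_comm μ (h' ∘ Prod.fst)]
  exact riskD_triangle (hh.comp measurable_fst) measurable_snd (hh'.comp measurable_fst)

end JointRisk

theorem ben_david_bound {X : Type*} [MeasurableSpace X]
    (pS pT : Measure (X × Bool)) [IsProbabilityMeasure pS] [IsProbabilityMeasure pT]
    (H : Set (X → Bool)) (hH : ∀ h ∈ H, Measurable h)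
    (h : X → Bool) (hh : h ∈ H) (hstar : X → Bool) (hhstar : hstar ∈ H) :
    riskJ pT h ≤ riskJ pS h + hDiv (pS.map Prod.fst) (pT.map Prod.fst) H
      + riskJ pS hstar + riskJ pT hstar := by
  have := Measure.isProbabilityMeasure_map (μ := pS) measurable_fst.aemeasurable
  have := Measure.isProbabilityMeasure_map (μ := pT) measurable_fst.aemeasurable
  have target := riskJ_le_riskD_map_fst_add (μ := pT) (hH h hh) (hH hstar hhstar)
  have source := riskD_map_fst_le_riskJ_add (μ := pS) (hH h hh) (hH hstar hhstar)
  obtain ⟨-, shift⟩ := abs_sub_le_iff.mp (abs_riskD_sub_riskD_le_hDiv hH hh hhstar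
    (μ := pS.map Prod.fst) (ν := pT.map Prod.fst))
  linarith
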